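/- arXiv:1210.6430 — 2 statements merged into one kernel-verified Lean document; each statement's English description precedes it below -/
import Mathlib

section
/- The matrix π₁ satisfies the orthogonality relations defining A_q(B₃): for all 1 ≤ i,m ≤ 7 one has Σ_{j,k,l=1}^{7} C_{jk} C_{lm} π₁(t_{ij}) ∘ π₁(t_{lk}) = δ_{i,m}·id_F and Σ_{j,k,l=1}^{7} C_{ij} C_{kl} π₁(t_{kj}) ∘ π₁(t_{lm}) = δ_{i,m}·id_F as operators on F. -/
open TensorProduct

noncomputable section

abbrev Fq : Type := RatFunc ℚ

def q : Fq := RatFunc.X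

abbrev F : Type := ℕ →₀ Fq

def ket (m : ℕ) : F := Finsupp.single m 1

/-- Linear operator on the Fock space from its action on the basis. -/
def opOf (v : ℕ → F) : F →ₗ[Fq] F := Finsupp.lift F Fq ℕ v

/-- q²-oscillator K -/
def K2 : F →ₗ[Fq] F := opOf fun m => q ^ (2 * m) • ket m
/-- q²-oscillator A⁺ -/
def Ap : F →ₗ[Fq] F := opOf fun m => ket (m + 1)
/-- q²-oscillator A⁻ -/
def Am : F →ₗ[Fq] F := opOf fun m => (1 - q ^ (4 * m)) • ket (m - 1)
/-- q-oscillator k -/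
def kk : F →ₗ[Fq] F := opOf fun m => q ^ m • ket m
/-- q-oscillator a⁺ -/
def ap : F →ₗ[Fq] F := opOf fun m => ket (m + 1)
/-- q-oscillator a⁻ -/
def am : F →ₗ[Fq] F := opOf fun m => (1 - q ^ (2 * m)) • ket (m - 1)

def pi1 (α β μ ν κ σ : Fq) : Matrix (Fin 7) (Fin 7) (F →ₗ[Fq] F) :=
  !![μ • Am, α • K2, 0, 0, 0, 0, 0;
     β • K2, ν • Ap, 0, 0, 0, 0, 0;
     0, 0, κ • LinearMap.id, 0, 0, 0, 0;
     0, 0, 0, σ • LinearMap.id, 0, 0, 0;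
     0, 0, 0, 0, κ⁻¹ • LinearMap.id, 0, 0;
     0, 0, 0, 0, 0, ν⁻¹ • Am, (q ^ 2 * β⁻¹) • K2;
     0, 0, 0, 0, 0, (q ^ 2 * α⁻¹) • K2, μ⁻¹ • Ap]

def pi2 (α β μ ν κ σ : Fq) : Matrix (Fin 7) (Fin 7) (F →ₗ[Fq] F) :=
  !![κ • LinearMap.id, 0, 0, 0, 0, 0, 0;
     0, μ • Am, α • K2, 0, 0, 0, 0;
     0, β • K2, ν • Ap, 0, 0, 0, 0;
     0, 0, 0, σ • LinearMap.id, 0, 0, 0;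
     0, 0, 0, 0, ν⁻¹ • Am, (q ^ 2 * β⁻¹) • K2, 0;
     0, 0, 0, 0, (q ^ 2 * α⁻¹) • K2, μ⁻¹ • Ap, 0;
     0, 0, 0, 0, 0, 0, κ⁻¹ • LinearMap.id]

def pi3 (α μ κa κb : Fq) : Matrix (Fin 7) (Fin 7) (F →ₗ[Fq] F) :=
  !![κa • LinearMap.id, 0, 0, 0, 0, 0, 0;
     0, κb • LinearMap.id, 0, 0, 0, 0, 0;
     0, 0, μ • (am ∘ₗ am), α • (kk ∘ₗ am), (-((1 + q ^ 2) * μ)⁻¹ * α ^ 2) • (kk ∘ₗ kk), 0, 0;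
     0, 0, (-(1 + q ^ 2) * α⁻¹ * μ) • (am ∘ₗ kk), am ∘ₗ ap - kk ∘ₗ kk, (-(q * μ)⁻¹ * α) • (kk ∘ₗ ap), 0, 0;
     0, 0, (-(1 + q ^ 2) * q ^ 2 * α⁻¹ ^ 2 * μ) • (kk ∘ₗ kk), ((1 + q ^ 2) * α⁻¹) • (kk ∘ₗ ap), μ⁻¹ • (ap ∘ₗ ap), 0, 0;
     0, 0, 0, 0, 0, κb⁻¹ • LinearMap.id, 0;
     0, 0, 0, 0, 0, 0, κa⁻¹ • LinearMap.id]

def rhoB : Fin 7 → ℤ := ![5, 3, 1, 0, -1, -3, -5]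

def CB : Matrix (Fin 7) (Fin 7) Fq := fun i j => if (i : ℕ) + (j : ℕ) = 6 then q ^ rhoB j else 0

/-! Write `T = π₁` and `S = C Tᵀ C⁻¹`. Since `C` is antidiagonal, the two sums are the `(i, m)`
entries of `T S` and `S T`, so the claim is that `S` is a two-sided inverse of `T`. The matrix `T`
is block diagonal with blocks `{1,2}, {3}, {4}, {5}, {6,7}` and index reversal swaps the two outer
blocks, so the products only pair the block `{1,2}` with `{6,7}` and the middle entries with each
other. These reduce to `κ κ⁻¹ = 1`, `σ² = 1`, the `q²`-oscillator relations
`A⁻A⁺ = 1 - q⁴K²`, `A⁺A⁻ = 1 - K²`, `K A⁺ = q² A⁺K`, `A⁻K = q² K A⁻`, and `αβ = -q²μν`. -/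

lemma q_ne_zero : q ≠ 0 := RatFunc.X_ne_zero

lemma opOf_ket (v : ℕ → F) (n : ℕ) : opOf v (ket n) = v n := by simp [opOf, ket]

lemma K2_ket (n : ℕ) : K2 (ket n) = q ^ (2 * n) • ket n := opOf_ket _ n

lemma Ap_ket (n : ℕ) : Ap (ket n) = ket (n + 1) := opOf_ket _ n

lemma Am_ket (n : ℕ) : Am (ket n) = (1 - q ^ (4 * n)) • ket (n - 1) := opOf_ket _ n

lemma linearMap_ext_ket {M : Type*} [AddCommMonoid M] [Module Fq M] {f g : F →ₗ[Fq] M}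
    (h : ∀ n, f (ket n) = g (ket n)) : f = g :=
  Finsupp.lhom_ext' fun n => LinearMap.ext_ring (h n)

lemma Am_mul_Ap : Am * Ap = 1 - q ^ 4 • (K2 * K2) := by
  refine linearMap_ext_ket fun n => ?_
  simp only [Module.End.mul_apply, LinearMap.sub_apply, Module.End.one_apply,
    LinearMap.smul_apply, map_smul, K2_ket, Ap_ket, Am_ket, smul_smul, Nat.add_sub_cancel]
  rw [sub_smul, one_smul]
  ring_nf

lemma Ap_mul_Am : Ap * Am = 1 - K2 * K2 := by
  refine linearMap_ext_ket fun n => ?_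
  simp only [Module.End.mul_apply, LinearMap.sub_apply, Module.End.one_apply,
    map_smul, K2_ket, Ap_ket, Am_ket, smul_smul]
  cases n with
  | zero => simp
  | succ n => rw [Nat.add_sub_cancel, sub_smul, one_smul]; ring_nf

lemma K2_mul_Ap : K2 * Ap = q ^ 2 • (Ap * K2) := by
  refine linearMap_ext_ket fun n => ?_
  simp only [Module.End.mul_apply, LinearMap.smul_apply, map_smul, K2_ket, Ap_ket, smul_smul]
  ring_nf

lemma Am_mul_K2 : Am * K2 = q ^ 2 • (K2 * Am) := by
  refine linearMap_ext_ket fun n => ?_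
  simp only [Module.End.mul_apply, LinearMap.smul_apply, map_smul, K2_ket, Am_ket, smul_smul]
  cases n with
  | zero => simp
  | succ n => rw [Nat.add_sub_cancel]; ring_nf

lemma CB_apply (i j : Fin 7) : CB i j = if j = i.rev then q ^ rhoB j else 0 := by
  simp only [CB, Fin.ext_iff, Fin.val_rev]
  grind

lemma rhoB_rev (i : Fin 7) : rhoB i.rev = -rhoB i := by
  fin_cases i <;> rfl

/-- The matrix `C Aᵀ C⁻¹` for the antidiagonal matrix `C = CB`. -/
def antipodeB {R : Type*} [SMul Fq R] (A : Matrix (Fin 7) (Fin 7) R) : Matrix (Fin 7) (Fin 7) R :=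
  fun i j => q ^ (rhoB j - rhoB i) • A j.rev i.rev

section

variable {M : Type*} [AddCommGroup M] [Module Fq M]

lemma sum_CB_smul_comp_eq_mul_antipodeB (A : Matrix (Fin 7) (Fin 7) (Module.End Fq M))
    (i m : Fin 7) :
    ∑ j, ∑ k, ∑ l, (CB j k * CB l m) • (A i j ∘ₗ A l k) = (A * antipodeB A) i m := by
  simp only [Matrix.mul_apply, antipodeB, Module.End.mul_eq_comp, LinearMap.comp_smul,
    sub_eq_neg_add, zpow_add₀ q_ne_zero, ← rhoB_rev]
  simp [CB_apply, ite_smul, eq_comm (a := m), Fin.rev_eq_iff]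

lemma sum_CB_smul_comp_eq_antipodeB_mul (A : Matrix (Fin 7) (Fin 7) (Module.End Fq M))
    (i m : Fin 7) :
    ∑ j, ∑ k, ∑ l, (CB i j * CB k l) • (A k j ∘ₗ A l m) = (antipodeB A * A) i m := by
  simp only [Matrix.mul_apply, antipodeB, Module.End.mul_eq_comp, LinearMap.smul_comp,
    sub_eq_neg_add, zpow_add₀ q_ne_zero, ← rhoB_rev]
  simp only [CB_apply, mul_ite, ite_mul, zero_mul, mul_zero, ite_smul, zero_smul,
    Finset.sum_ite_eq', Finset.mem_univ, ↓reduceIte, Finset.sum_ite_irrel, Finset.sum_const_zero]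
  exact Fintype.sum_equiv Fin.revPerm _ _ fun k => by simp

end

set_option maxHeartbeats 600000 in
lemma pi1_mul_antipodeB_and_antipodeB_mul_pi1 {α β μ ν κ σ : Fq} (hα : α ≠ 0) (hβ : β ≠ 0)
    (hμ : μ ≠ 0) (hν : ν ≠ 0) (hκ : κ ≠ 0) (hrel : α * β = -q ^ 2 * (μ * ν))
    (hσ : σ = 1 ∨ σ = -1) :
    pi1 α β μ ν κ σ * antipodeB (pi1 α β μ ν κ σ) = 1 ∧
      antipodeB (pi1 α β μ ν κ σ) * pi1 α β μ ν κ σ = 1 := by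
  have hσ2 : σ ^ 2 = 1 := by rcases hσ with rfl | rfl <;> norm_num
  have hq := q_ne_zero
  constructor <;> ext1 i m <;> fin_cases i <;> fin_cases m <;>
    simp only [Matrix.mul_apply, Fin.sum_univ_seven, antipodeB, pi1, rhoB, Matrix.of_apply,
      Matrix.cons_val', Matrix.cons_val, Matrix.cons_val_zero, Matrix.cons_val_one,
      Matrix.cons_val_fin_one, Matrix.one_apply_eq, Matrix.one_apply_ne, Fin.isValue, Fin.reduceRev,
      Fin.reduceFinMk, Fin.reduceEq, Int.reduceSub, Int.reduceNeg, zpow_ofNat, zpow_neg, sub_self,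
      zero_mul, mul_zero, smul_zero, add_zero, zero_add, ne_eq, not_false_eq_true,
      Algebra.mul_smul_comm, Algebra.smul_mul_assoc]
  all_goals
    simp only [← Module.End.one_eq_id, mul_one, smul_smul, ← add_smul, Am_mul_Ap, Ap_mul_Am,
      K2_mul_Ap, Am_mul_K2]
    field_simp
  all_goals first
    | simp only [one_smul, hσ2] <;> abel
    | refine smul_eq_zero_of_left ?_ _
      rw [div_eq_zero_iff]
      left
      first | linear_combination hrel | linear_combination q ^ 2 * hrel

theorem pi1_orthogonality_general
    (α β μ ν κ σ : Fq) (hα : α ≠ 0) (hβ : β ≠ 0) (hμ : μ ≠ 0) (hν : ν ≠ 0)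
    (hκ : κ ≠ 0)
    (hrel : α * β = -q ^ 2 * (μ * ν)) (hσ : σ = 1 ∨ σ = -1) :
    ∀ i m : Fin 7,
      ((∑ j : Fin 7, ∑ k : Fin 7, ∑ l : Fin 7,
        (CB j k * CB l m) • (pi1 α β μ ν κ σ i j ∘ₗ pi1 α β μ ν κ σ l k))
        = if i = m then LinearMap.id else 0) ∧
      ((∑ j : Fin 7, ∑ k : Fin 7, ∑ l : Fin 7,
        (CB i j * CB k l) • (pi1 α β μ ν κ σ k j ∘ₗ pi1 α β μ ν κ σ l m))
        = if i = m then LinearMap.id else 0) := by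
  obtain ⟨h_mul_antipode, h_antipode_mul⟩ :=
    pi1_mul_antipodeB_and_antipodeB_mul_pi1 hα hβ hμ hν hκ hrel hσ
  intro i m
  rw [sum_CB_smul_comp_eq_mul_antipodeB, sum_CB_smul_comp_eq_antipodeB_mul, h_mul_antipode,
    h_antipode_mul]
  exact ⟨Matrix.one_apply, Matrix.one_apply⟩

/-- the matrix π₁ satisfies the orthogonality relations defining A_q(B₃). -/
theorem pi1_orthogonality
    (α β μ ν κ σ : Fq) (hα : α ≠ 0) (hβ : β ≠ 0) (hμ : μ ≠ 0) (hν : ν ≠ 0)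
    (hκ : κ ≠ 0) (hσ0 : σ ≠ 0)
    (hrel : α * β = -q ^ 2 * (μ * ν)) (hσ : σ = 1 ∨ σ = -1) :
    ∀ i m : Fin 7,
      ((∑ j : Fin 7, ∑ k : Fin 7, ∑ l : Fin 7,
        (CB j k * CB l m) • (pi1 α β μ ν κ σ i j ∘ₗ pi1 α β μ ν κ σ l k))
        = if i = m then LinearMap.id else 0) ∧
      ((∑ j : Fin 7, ∑ k : Fin 7, ∑ l : Fin 7,
        (CB i j * CB k l) • (pi1 α β μ ν κ σ k j ∘ₗ pi1 α β μ ν κ σ l m))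
        = if i = m then LinearMap.id else 0) :=
  pi1_orthogonality_general α β μ ν κ σ hα hβ hμ hν hκ hrel hσ
end
end

section
/- The matrix 𝒮 is symmetric under simultaneous reversal of upper and lower indices: for all a,b,c,i,j,k ∈ ℕ, 𝒮^{abc}_{ijk} = 𝒮^{cba}_{kji}. -/
open TensorProduct

noncomputable section

/-- `(p)_n` for an integer `n`: `∏_{l=1}^{n}(1-p^l)` if `n ≥ 0`, and `0` if `n < 0`
(the latter convention makes the q-multinomial bracket below vanish, via multiplication
for a numerator index and via division by zero for a denominator index, whenever some
index is negative, as required). -/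
def qfac (p : Fq) (n : ℤ) : Fq :=
  if 0 ≤ n then ∏ l ∈ Finset.range n.toNat, (1 - p ^ (l + 1)) else 0

/-- The matrix element 𝒮^{abc}_{ijk} (with λ = b - μ in the sum over λ + μ = b). -/
def Scoef (a b c i j k : ℕ) : Fq :=
  (if i + j = a + b then 1 else 0) * (if j + k = b + c then 1 else 0) *
    ∑ μ ∈ Finset.range (b + 1),
      (-1 : Fq) ^ (b - μ) *
        q ^ (2 * (i : ℤ) * ((c : ℤ) - (j : ℤ)) + 2 * ((k : ℤ) + 1) * ((b : ℤ) - (μ : ℤ))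
          + 2 * (μ : ℤ) * ((μ : ℤ) - (k : ℤ))) *
        ((qfac (q ^ 4) (i : ℤ) * qfac (q ^ 4) (j : ℤ) * qfac (q ^ 4) ((c : ℤ) + (μ : ℤ))) /
          (qfac (q ^ 4) (μ : ℤ) * qfac (q ^ 4) ((b : ℤ) - (μ : ℤ)) *
            qfac (q ^ 4) ((i : ℤ) - (μ : ℤ)) * qfac (q ^ 4) ((j : ℤ) - ((b : ℤ) - (μ : ℤ))) *
            qfac (q ^ 4) (c : ℤ)))


section ScoefSymmAux

lemma hq0 : (q : Fq) ≠ 0 := RatFunc.X_ne_zero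

lemma q_pow_ne_one {n : ℕ} (hn : n ≠ 0) : (q : Fq) ^ n ≠ 1 := by
  intro h
  have h2 : (algebraMap (Polynomial ℚ) (RatFunc ℚ)) (Polynomial.X ^ n) =
      (algebraMap (Polynomial ℚ) (RatFunc ℚ)) 1 := by
    rw [map_pow, RatFunc.algebraMap_X, map_one]
    exact h
  have h3 := RatFunc.algebraMap_injective ℚ h2
  have h4 := Polynomial.natDegree_X_pow (R := ℚ) n
  rw [h3] at h4
  simp at h4
  omega

lemma one_sub_q_pow_ne {n : ℕ} (hn : n ≠ 0) : (1 : Fq) - q ^ n ≠ 0 := by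
  intro h
  exact q_pow_ne_one hn (sub_eq_zero.mp h).symm

lemma Wne (u : ℕ) : (q : Fq) ^ (4*u) - q ^ (4*(2*u+1)) ≠ 0 := by
  have h : (q : Fq) ^ (4*u) - q ^ (4*(2*u+1)) = q ^ (4*u) * (1 - q ^ (4*(u+1))) := by ring
  rw [h]
  exact mul_ne_zero (pow_ne_zero _ hq0) (one_sub_q_pow_ne (by omega))

/-- `(p;p)_n` with `p = q⁴`. -/
def Nq (n : ℕ) : Fq := ∏ l ∈ Finset.range n, (1 - q ^ (4*(l+1)))

lemma Nq_ne (n : ℕ) : Nq n ≠ 0 :=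
  Finset.prod_ne_zero_iff.mpr fun _ _ => one_sub_q_pow_ne (by omega)

lemma Nq_zero : Nq 0 = 1 := Finset.prod_range_zero _

lemma Nq_succ (n : ℕ) : Nq (n+1) = Nq n * (1 - q ^ (4*(n+1))) := Finset.prod_range_succ _ _

/-- Gaussian binomial coefficient with base `q⁴`. -/
def bin (n m : ℕ) : Fq := if m ≤ n then Nq n / (Nq m * Nq (n-m)) else 0

lemma bin_zero (n : ℕ) : bin n 0 = 1 := by
  rw [bin, if_pos (Nat.zero_le n), Nq_zero, one_mul, Nat.sub_zero, div_self (Nq_ne n)]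

lemma bin_diag (n : ℕ) : bin n n = 1 := by
  rw [bin, if_pos le_rfl, Nat.sub_self, Nq_zero, mul_one, div_self (Nq_ne n)]

lemma bin_eq_zero {n m : ℕ} (h : n < m) : bin n m = 0 := by
  rw [bin, if_neg (by omega)]

lemma pascal2 (n m : ℕ) :
    bin (n+1) (m+1) = q ^ (4*(n-m)) * bin n m + bin n (m+1) := by
  rcases le_or_gt m n with h | h
  · obtain ⟨r, rfl⟩ := Nat.exists_eq_add_of_le h
    rcases r with _ | r
    · simp only [Nat.add_zero]
      rw [Nat.sub_self, bin_diag, bin_diag, bin_eq_zero (Nat.lt_succ_self m)]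
      ring
    · have e1 : m + (r+1) + 1 - (m+1) = r+1 := by omega
      have e2 : m + (r+1) - m = r+1 := by omega
      have e3 : m + (r+1) - (m+1) = r := by omega
      rw [bin, bin, bin, if_pos (by omega), if_pos (by omega), if_pos (by omega), e1, e2, e3]
      rw [Nq_succ (m + (r+1)), Nq_succ m, Nq_succ r]
      have n1 := Nq_ne m; have n2 := Nq_ne r; have n3 := Nq_ne (m + (r+1))
      have n4 := one_sub_q_pow_ne (n := 4*(m+1)) (by omega)
      have n5 := one_sub_q_pow_ne (n := 4*(r+1)) (by omega)
      field_simp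
      ring
  · rw [bin_eq_zero (by omega), bin_eq_zero h, bin_eq_zero (by omega)]
    ring

lemma absq (n m : ℕ) :
    (q ^ (4*m) - q ^ (4*(2*m+1))) * bin n (m+1) = (q ^ (4*m) - q ^ (4*n)) * bin n m := by
  rcases le_or_gt (m+1) n with h | h
  · obtain ⟨s, rfl⟩ := Nat.exists_eq_add_of_le h
    have e1 : m+1+s - (m+1) = s := by omega
    have e2 : m+1+s - m = s+1 := by omega
    rw [bin, bin, if_pos (by omega), if_pos (by omega), e1, e2, Nq_succ m, Nq_succ s]
    have n1 := Nq_ne m; have n2 := Nq_ne s; have n3 := Nq_ne (m+1+s)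
    have n4 := one_sub_q_pow_ne (n := 4*(m+1)) (by omega)
    have n5 := one_sub_q_pow_ne (n := 4*(s+1)) (by omega)
    field_simp
    ring
  · rcases eq_or_lt_of_le (show n ≤ m by omega) with rfl | h2
    · rw [bin_eq_zero (Nat.lt_succ_self n), bin_diag]
      ring
    · rw [bin_eq_zero (show n < m+1 by omega), bin_eq_zero h2]
      ring

/-- `∏_{l<μ} (q^{4b} - q^{4(a+l+1)})`. -/
def PQ (a b μ : ℕ) : Fq := ∏ l ∈ Finset.range μ, (q ^ (4*b) - q ^ (4*(a+l+1)))

lemma PQ_zero (a b : ℕ) : PQ a b 0 = 1 := Finset.prod_range_zero _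

lemma PQ_succ (a b μ : ℕ) : PQ a b (μ+1) = PQ a b μ * (q ^ (4*b) - q ^ (4*(a+μ+1))) :=
  Finset.prod_range_succ _ _

lemma PQ_shift (a b μ : ℕ) : PQ (a+1) (b+1) μ = q ^ (4*μ) * PQ a b μ := by
  induction μ with
  | zero => simp [PQ_zero]
  | succ n ihn => rw [PQ_succ, PQ_succ, ihn]; ring

lemma PQ_B1 (a b μ : ℕ) :
    PQ a (b+1) (μ+1) = q ^ (4*μ) * (q ^ (4*(b+1)) - q ^ (4*(a+1))) * PQ a b μ := by
  rw [PQ, Finset.prod_range_succ']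
  have h : ∀ l ∈ Finset.range μ, ((q:Fq) ^ (4*(b+1)) - q ^ (4*(a+(l+1)+1)))
      = (q ^ (4*(b+1)) - q ^ (4*((a+1)+l+1))) := by
    intro l _
    rw [show a+(l+1)+1 = (a+1)+l+1 from by omega]
  rw [Finset.prod_congr rfl h,
    show (∏ l ∈ Finset.range μ, ((q:Fq) ^ (4*(b+1)) - q ^ (4*((a+1)+l+1)))) = PQ (a+1) (b+1) μ
      from rfl, PQ_shift]
  ring

/-- Normalized summand family for the 3D-R matrix element. -/
def SN (i j k b : ℕ) : Fq := ∑ μ ∈ Finset.range (b+1),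
  (-1:Fq) ^ (b-μ) * q ^ (2*(b-μ)*(b-μ+2*k+1)) * bin i μ * bin j (b-μ) * PQ (j+k) b μ

lemma SN_b0 (i j k : ℕ) : SN i j k 0 = 1 := by
  rw [SN, Finset.sum_range_one]
  norm_num [bin_zero, PQ_zero]

lemma R1N (i j k b : ℕ) :
    SN (i+1) j k (b+1) = SN i j k (b+1) + (q ^ (4*(i+b+1)) - q ^ (4*(i+j+k+1))) * SN i j k b := by
  unfold SN
  rw [Finset.sum_range_succ' (fun μ => (-1:Fq) ^ (b+1-μ) * q ^ (2*(b+1-μ)*(b+1-μ+2*k+1))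
        * bin (i+1) μ * bin j (b+1-μ) * PQ (j+k) (b+1) μ) (b+1),
      Finset.sum_range_succ' (fun μ => (-1:Fq) ^ (b+1-μ) * q ^ (2*(b+1-μ)*(b+1-μ+2*k+1))
        * bin i μ * bin j (b+1-μ) * PQ (j+k) (b+1) μ) (b+1),
      Finset.mul_sum]
  have h0 : (-1:Fq) ^ (b+1-0) * q ^ (2*(b+1-0)*(b+1-0+2*k+1)) * bin (i+1) 0 * bin j (b+1-0)
      * PQ (j+k) (b+1) 0
      = (-1:Fq) ^ (b+1-0) * q ^ (2*(b+1-0)*(b+1-0+2*k+1)) * bin i 0 * bin j (b+1-0)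
      * PQ (j+k) (b+1) 0 := by
    rw [bin_zero, bin_zero]
  have hsum : ∀ μ ∈ Finset.range (b+1),
      (-1:Fq) ^ (b+1-(μ+1)) * q ^ (2*(b+1-(μ+1))*(b+1-(μ+1)+2*k+1)) * bin (i+1) (μ+1)
        * bin j (b+1-(μ+1)) * PQ (j+k) (b+1) (μ+1)
      = (-1:Fq) ^ (b+1-(μ+1)) * q ^ (2*(b+1-(μ+1))*(b+1-(μ+1)+2*k+1)) * bin i (μ+1)
        * bin j (b+1-(μ+1)) * PQ (j+k) (b+1) (μ+1)
      + (q ^ (4*(i+b+1)) - q ^ (4*(i+j+k+1))) *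
        ((-1:Fq) ^ (b-μ) * q ^ (2*(b-μ)*(b-μ+2*k+1)) * bin i μ * bin j (b-μ) * PQ (j+k) b μ) := by
    intro μ _
    simp only [Nat.succ_sub_succ_eq_sub]
    rw [pascal2, PQ_B1]
    rcases le_or_gt μ i with hμi | hμi
    · obtain ⟨d, rfl⟩ := Nat.exists_eq_add_of_le hμi
      rw [show μ + d - μ = d from by omega]
      ring
    · rw [bin_eq_zero hμi, bin_eq_zero (show i < μ+1 by omega)]
      ring
  rw [Finset.sum_congr rfl hsum, Finset.sum_add_distrib, h0]
  ring

/-- Summand of `SN i j (k+1) (b+1)`. -/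
def tauL (i j k b μ : ℕ) : Fq :=
  (-1:Fq) ^ (b+1-μ) * q ^ (2*(b+1-μ)*(b+1-μ+2*k+3)) * bin i μ * bin j (b+1-μ)
    * PQ (j+k+1) (b+1) μ

/-- Summand of `SN i j k (b+1)`. -/
def tau1 (i j k b μ : ℕ) : Fq :=
  (-1:Fq) ^ (b+1-μ) * q ^ (2*(b+1-μ)*(b+1-μ+2*k+1)) * bin i μ * bin j (b+1-μ)
    * PQ (j+k) (b+1) μ

/-- Coefficient times summand of `SN i j k b`. -/
def tau2 (i j k b μ : ℕ) : Fq :=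
  (q ^ (4*(b+k+1)) - q ^ (4*(i+j+k+1))) *
    ((-1:Fq) ^ (b-μ) * q ^ (2*(b-μ)*(b-μ+2*k+1)) * bin i μ * bin j (b-μ) * PQ (j+k) b μ)

/-- Telescoping certificate. -/
def Gg (i j k b m : ℕ) : Fq :=
  (-1:Fq) ^ (b+1-m) * q ^ (2*((b-m)*(b-m)+2*k*(b-m)+(b-m)+2*j+2*k+2))
    * (q ^ (4*m) - q ^ (4*i)) * bin i m * bin j (b-m) * PQ (j+k) b m

lemma I0N (i j k b : ℕ) : tauL i j k b 0 - tau1 i j k b 0 - tau2 i j k b 0 = Gg i j k b 0 := by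
  unfold tauL tau1 tau2 Gg
  simp only [Nat.sub_zero, bin_zero, PQ_zero, mul_one, one_mul]
  apply mul_left_cancel₀ (Wne b)
  linear_combination ((-1:Fq) ^ (b+1) * (q ^ (2*(b+1)*(b+1+2*k+3)) - q ^ (2*(b+1)*(b+1+2*k+1))))
    * absq j b

lemma ISN (i j k m u : ℕ) :
    Gg i j k (m+1+u) (m+1) = Gg i j k (m+1+u) m
      + (tauL i j k (m+1+u) (m+1) - tau1 i j k (m+1+u) (m+1) - tau2 i j k (m+1+u) (m+1)) := by
  unfold tauL tau1 tau2 Gg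
  rw [show m+1+u+1-(m+1) = u+1 from by omega, show m+1+u-(m+1) = u from by omega,
      show m+1+u+1-m = u+2 from by omega, show m+1+u-m = u+1 from by omega]
  rw [PQ_shift, PQ_B1]
  simp only [PQ_succ]
  apply mul_left_cancel₀ (Wne u)
  linear_combination
    ((-1:Fq) ^ (u+1) *
      ((q ^ (2*((u+1)*(u+1)+2*k*(u+1)+(u+1)+2*j+2*k+2)) * PQ (j+k) (m+1+u) m)
          * (q ^ (4*m) - q ^ (4*i)) * bin i m
        + ((-(q ^ (2*(u+1)*(u+1+2*k+3)) * q ^ (4*(m+1))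
              * (q ^ (4*(m+1+u)) - q ^ (4*(j+k+m+1))))
            + q ^ (2*(u+1)*(u+1+2*k+1)) * q ^ (4*m)
              * (q ^ (4*(m+1+u+1)) - q ^ (4*(j+k+1)))) * PQ (j+k) (m+1+u) m) * bin i (m+1)))
      * absq j u
    - ((-1:Fq) ^ (u+1) * (q ^ (2*((u+1)*(u+1)+2*k*(u+1)+(u+1)+2*j+2*k+2))
          * PQ (j+k) (m+1+u) m) * (q ^ (4*u) - q ^ (4*j)) * bin j u)
      * absq i m

lemma IFN (i j k b : ℕ) : Gg i j k b b + (tauL i j k b (b+1) - tau1 i j k b (b+1)) = 0 := by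
  unfold tauL tau1 Gg
  rw [show b+1-(b+1) = 0 from by omega, show b+1-b = 1 from by omega]
  simp only [Nat.sub_self]
  rw [PQ_shift, PQ_B1, PQ_succ]
  simp only [bin_zero]
  linear_combination (q ^ (2*(2*j+2*k+2)) * PQ (j+k) b b) * absq i b

lemma Ppart (i j k b : ℕ) : ∀ m, m ≤ b →
    ∑ μ ∈ Finset.range (m+1), (tauL i j k b μ - tau1 i j k b μ - tau2 i j k b μ)
      = Gg i j k b m := by
  intro m
  induction m with
  | zero =>
    intro _
    rw [Finset.sum_range_one]
    exact I0N i j k b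
  | succ m ihm =>
    intro hm
    obtain ⟨u, rfl⟩ : ∃ u, b = m+1+u := ⟨b-(m+1), by omega⟩
    rw [Finset.sum_range_succ, ihm (by omega), ISN i j k m u]

lemma R2N (i j k b : ℕ) :
    SN i j (k+1) (b+1) = SN i j k (b+1) + (q ^ (4*(b+k+1)) - q ^ (4*(i+j+k+1))) * SN i j k b := by
  have h1 : SN i j (k+1) (b+1) = ∑ μ ∈ Finset.range (b+1+1), tauL i j k b μ := by
    unfold SN tauL
    refine Finset.sum_congr rfl fun μ _ => ?_
    rw [show b+1-μ+2*(k+1)+1 = b+1-μ+2*k+3 from by omega, show j+(k+1) = j+k+1 from by omega]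
  have h2 : SN i j k (b+1) = ∑ μ ∈ Finset.range (b+1+1), tau1 i j k b μ := rfl
  have h3 : (q ^ (4*(b+k+1)) - q ^ (4*(i+j+k+1))) * SN i j k b
      = ∑ μ ∈ Finset.range (b+1), tau2 i j k b μ := by
    rw [SN, Finset.mul_sum]
    rfl
  rw [h1, h2, h3]
  have key := Ppart i j k b b le_rfl
  have fin := IFN i j k b
  rw [Finset.sum_range_succ (tauL i j k b) (b+1), Finset.sum_range_succ (tau1 i j k b) (b+1)]
  have key2 : (∑ μ ∈ Finset.range (b+1), tauL i j k b μ)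
      - (∑ μ ∈ Finset.range (b+1), tau1 i j k b μ)
      - (∑ μ ∈ Finset.range (b+1), tau2 i j k b μ) = Gg i j k b b := by
    rw [← Finset.sum_sub_distrib, ← Finset.sum_sub_distrib]
    exact key
  linear_combination key2 + fin

lemma symSN : ∀ i j k b : ℕ, SN i j k b = SN k j i b := by
  suffices H : ∀ n, ∀ i j k b : ℕ, i + k + b ≤ n → SN i j k b = SN k j i b by
    intro i j k b
    exact H (i+k+b) i j k b le_rfl
  intro n
  induction n with
  | zero =>
    intro i j k b hn
    obtain ⟨rfl, rfl, rfl⟩ : i = 0 ∧ k = 0 ∧ b = 0 := by omega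
    rfl
  | succ n ih =>
    intro i j k b hn
    rcases b with _ | b
    · rw [SN_b0, SN_b0]
    rcases i with _ | i
    · rcases k with _ | k
      · rfl
      · rw [R2N 0 j k b, R1N k j 0 b,
          ih 0 j k (b+1) (by omega), ih 0 j k b (by omega),
          show 4*(b+k+1) = 4*(k+b+1) from by ring, show 4*(0+j+k+1) = 4*(k+j+0+1) from by ring]
    · rw [R1N i j k b, R2N k j i b,
        ih i j k (b+1) (by omega), ih i j k b (by omega),
        show 4*(i+b+1) = 4*(b+i+1) from by ring, show 4*(i+j+k+1) = 4*(k+j+i+1) from by ring]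

lemma qfac_natCast (n : ℕ) : qfac (q^4) (n : ℤ) = Nq n := by
  rw [qfac, if_pos (Int.natCast_nonneg n), Int.toNat_natCast]
  exact Finset.prod_congr rfl fun l _ => by rw [pow_mul]

lemma qfac_neg {z : ℤ} (h : z < 0) : qfac (q^4) z = 0 := if_neg (by omega)

/-- `∏_{l<μ}(1-q^{4(c+l+1)})`. -/
def PN (c μ : ℕ) : Fq := ∏ l ∈ Finset.range μ, (1 - q ^ (4*(c+l+1)))

lemma PN_succ (c μ : ℕ) : PN c (μ+1) = PN c μ * (1 - q ^ (4*(c+μ+1))) :=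
  Finset.prod_range_succ _ _

lemma Nq_add (c μ : ℕ) : Nq (c+μ) = Nq c * PN c μ := by
  induction μ with
  | zero => simp [PN]
  | succ n ihn => rw [show c+(n+1) = (c+n)+1 from rfl, Nq_succ, ihn, PN_succ]; ring

lemma PQ_eq (b c μ : ℕ) : PQ (b+c) b μ = q ^ (4*b*μ) * PN c μ := by
  induction μ with
  | zero => simp [PQ_zero, PN]
  | succ n ihn => rw [PQ_succ, ihn, PN_succ]; ring

lemma bracket (b c i j : ℕ) {μ : ℕ} (hμ : μ ≤ b) :
    qfac (q^4) (i:ℤ) * qfac (q^4) (j:ℤ) * qfac (q^4) ((c:ℤ) + (μ:ℤ)) /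
      (qfac (q^4) (μ:ℤ) * qfac (q^4) ((b:ℤ) - (μ:ℤ)) * qfac (q^4) ((i:ℤ) - (μ:ℤ)) *
        qfac (q^4) ((j:ℤ) - ((b:ℤ) - (μ:ℤ))) * qfac (q^4) (c:ℤ)) =
    bin i μ * bin j (b-μ) * PN c μ := by
  have hb : (b:ℤ) - (μ:ℤ) = ((b-μ : ℕ) : ℤ) := by omega
  have hc : (c:ℤ) + (μ:ℤ) = ((c+μ : ℕ) : ℤ) := by push_cast; ring
  rw [hb, hc, qfac_natCast, qfac_natCast, qfac_natCast, qfac_natCast, qfac_natCast, qfac_natCast]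
  rcases le_or_gt μ i with hi | hi
  · rcases le_or_gt (b-μ) j with hj | hj
    · have hi' : (i:ℤ) - (μ:ℤ) = ((i-μ:ℕ):ℤ) := by omega
      have hj' : (j:ℤ) - ((b-μ:ℕ):ℤ) = ((j-(b-μ):ℕ):ℤ) := by omega
      rw [hi', hj', qfac_natCast, qfac_natCast]
      rw [bin, bin, if_pos hi, if_pos hj, Nq_add c μ]
      have n1 := Nq_ne μ; have n2 := Nq_ne (b-μ); have n3 := Nq_ne (i-μ)
      have n4 := Nq_ne (j-(b-μ)); have n5 := Nq_ne c
      have hd : Nq μ * Nq (b - μ) * Nq (i - μ) * Nq (j - (b - μ)) * Nq c ≠ 0 :=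
        mul_ne_zero (mul_ne_zero (mul_ne_zero (mul_ne_zero n1 n2) n3) n4) n5
      rw [div_eq_iff hd]
      field_simp
    · have hj' : (j:ℤ) - ((b-μ:ℕ):ℤ) < 0 := by omega
      simp [qfac_neg hj', bin_eq_zero hj]
  · have hi' : (i:ℤ) - (μ:ℤ) < 0 := by omega
    simp [qfac_neg hi', bin_eq_zero hi]

lemma scoef_eq (a b c i j k : ℕ) (h1 : i + j = a + b) (h2 : j + k = b + c) :
    Scoef a b c i j k
      = q ^ (2*(i:ℤ)*((c:ℤ)-(j:ℤ)) - 2*(b:ℤ)*((b:ℤ)+(k:ℤ))) * SN i j k b := by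
  rw [Scoef, if_pos h1, if_pos h2, one_mul, one_mul, SN, Finset.mul_sum]
  refine Finset.sum_congr rfl fun μ hμ => ?_
  have hμb : μ ≤ b := by
    have := Finset.mem_range.mp hμ
    omega
  rw [bracket b c i j hμb, h2, PQ_eq b c μ]
  have key : (q:Fq) ^ (2 * (i:ℤ) * ((c:ℤ) - (j:ℤ)) + 2 * ((k:ℤ) + 1) * ((b:ℤ) - (μ:ℤ))
        + 2 * (μ:ℤ) * ((μ:ℤ) - (k:ℤ)))
      = q ^ (2*(i:ℤ)*((c:ℤ)-(j:ℤ)) - 2*(b:ℤ)*((b:ℤ)+(k:ℤ)))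
        * (q ^ (2*(b-μ)*(b-μ+2*k+1)) * q ^ (4*b*μ)) := by
    rw [← zpow_natCast (q:Fq) (2*(b-μ)*(b-μ+2*k+1)), ← zpow_natCast (q:Fq) (4*b*μ),
      ← zpow_add₀ hq0, ← zpow_add₀ hq0]
    congr 1
    push_cast [Nat.cast_sub hμb]
    ring
  rw [key]
  ring

end ScoefSymmAux

/-- 𝒮^{abc}_{ijk} = 𝒮^{cba}_{kji}. -/
theorem Scoef_symm : ∀ a b c i j k : ℕ, Scoef a b c i j k = Scoef c b a k j i := by
  intro a b c i j k
  by_cases h1 : i + j = a + b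
  · by_cases h2 : j + k = b + c
    · rw [scoef_eq a b c i j k h1 h2, scoef_eq c b a k j i (by omega) (by omega),
        ← symSN i j k b]
      congr 1
      have hc : (c:ℤ) = (j:ℤ) + (k:ℤ) - (b:ℤ) := by omega
      have ha : (a:ℤ) = (i:ℤ) + (j:ℤ) - (b:ℤ) := by omega
      rw [hc, ha]
      ring
    · rw [Scoef, Scoef, if_neg h2, if_neg (show ¬ (k + j = c + b) from by omega)]
      ring
  · rw [Scoef, Scoef, if_neg h1, if_neg (show ¬ (j + i = b + a) from by omega)]
    ring
end
end
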